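/- The function δ on G ∗ F(X) is symmetric, and for all u,v,w,x ∈ G ∗ F(X) one has δ(u·v, w·x) ≤ δ(u,w) + δ(v,x). Consequently δ satisfies the triangle inequality and is two-sided invariant: δ(g·u·h, g·v·h) = δ(u,v) for all g,h,u,v ∈ G ∗ F(X). -/

import Mathlib

open Monoid

/-- A (real-valued) metric on a type. -/
def IsMetricD {α : Type*} (d : α → α → ℝ) : Prop :=
  (∀ x y, d x y = 0 ↔ x = y) ∧ (∀ x y, d x y = d y x) ∧
  (∀ x y z, d x z ≤ d x y + d y z)

/-- Two-sided invariance of a distance function on a group. -/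
def IsBiInvariant {G : Type*} [Group G] (d : G → G → ℝ) : Prop :=
  ∀ g h x y : G, d (g * x * h) (g * y * h) = d x y

/-- The free product `G ∗ F(X)`. -/
abbrev FP (G X : Type*) [Group G] := Monoid.Coprod G (FreeGroup X)

/-- The alphabet `S = G ⊔ X ⊔ X⁻¹`. -/
abbrev Alphabet (G X : Type*) := G ⊕ (X ⊕ X)

/-- Canonical image of a letter in the free product. -/
def toFP {G X : Type*} [Group G] : Alphabet G X → FP G X
  | Sum.inl g => Coprod.inl g
  | Sum.inr (Sum.inl x) => Coprod.inr (FreeGroup.of x)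
  | Sum.inr (Sum.inr x) => (Coprod.inr (FreeGroup.of x) : FP G X)⁻¹

/-- For a word `w` over `S`, `wordProd w` is `w'`, the product of the images of its letters. -/
def wordProd {G X : Type*} [Group G] (w : List (Alphabet G X)) : FP G X :=
  (w.map toFP).prod

/-- `ρ(v,w) = d(v₁,w₁) + … + d(vₙ,wₙ)`. -/
def rho {α : Type*} (d : α → α → ℝ) (v w : List α) : ℝ :=
  (List.zipWith d v w).sum

/-- The Graev pre-metric `δ` on the free product. -/
noncomputable def graevDelta {G X : Type*} [Group G]
    (d : Alphabet G X → Alphabet G X → ℝ) (u v : FP G X) : ℝ :=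
  sInf { r | ∃ w₁ w₂ : List (Alphabet G X), w₁.length = w₂.length ∧
    wordProd w₁ = u ∧ wordProd w₂ = v ∧ r = rho d w₁ w₂ }

/-- The extension `d` of `d'` from `G ⊔ X` to `S = G ⊔ X ⊔ X⁻¹`. -/
noncomputable def extD {G X : Type*} [Group G] (d' : (G ⊕ X) → (G ⊕ X) → ℝ) :
    Alphabet G X → Alphabet G X → ℝ
  | Sum.inl g, Sum.inl h => d' (Sum.inl g) (Sum.inl h)
  | Sum.inl g, Sum.inr (Sum.inl x) => d' (Sum.inl g) (Sum.inr x)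
  | Sum.inr (Sum.inl x), Sum.inl g => d' (Sum.inr x) (Sum.inl g)
  | Sum.inr (Sum.inl x), Sum.inr (Sum.inl y) => d' (Sum.inr x) (Sum.inr y)
  | Sum.inl g, Sum.inr (Sum.inr x) => d' (Sum.inl g⁻¹) (Sum.inr x)
  | Sum.inr (Sum.inr x), Sum.inl g => d' (Sum.inr x) (Sum.inl g⁻¹)
  | Sum.inr (Sum.inr x), Sum.inr (Sum.inr y) => d' (Sum.inr x) (Sum.inr y)
  | Sum.inr (Sum.inl x), Sum.inr (Sum.inr y) =>
      sInf { r | ∃ c : G, r = d' (Sum.inr x) (Sum.inl c) + d' (Sum.inl c⁻¹) (Sum.inr y) }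
  | Sum.inr (Sum.inr x), Sum.inr (Sum.inl y) =>
      sInf { r | ∃ c : G, r = d' (Sum.inr y) (Sum.inl c) + d' (Sum.inl c⁻¹) (Sum.inr x) }

/-- Formal inverse of a letter of `S`. -/
def formalInv {G X : Type*} [Group G] : Alphabet G X → Alphabet G X
  | Sum.inl g => Sum.inl g⁻¹
  | Sum.inr (Sum.inl x) => Sum.inr (Sum.inr x)
  | Sum.inr (Sum.inr x) => Sum.inr (Sum.inl x)

/-- Admissible adjacent pair in an irreducible word. -/
def okPair {G X : Type*} [Group G] : Alphabet G X → Alphabet G X → Prop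
  | Sum.inl _, Sum.inl _ => False
  | Sum.inr x, Sum.inr y => Sum.inr y ≠ formalInv (Sum.inr x : Alphabet G X)
  | _, _ => True

/-- A word over `S` is irreducible if no two adjacent letters lie in `G`
and no two adjacent letters of `X ⊔ X⁻¹` are mutually inverse. -/
def IsIrreducibleWord {G X : Type*} [Group G] (w : List (Alphabet G X)) : Prop :=
  List.Chain' okPair w

/-- A finitely generated metric on a group, with generating set `A`. -/
def IsFinGenMetric {G : Type*} [Group G] (d : G → G → ℝ) (A : Set G) : Prop :=
  A.Finite ∧ (1 : G) ∈ A ∧ (∀ a ∈ A, a⁻¹ ∈ A) ∧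
  ∀ a b : G, IsLeast { r | ∃ l m : List G, l.length = m.length ∧
    (∀ x ∈ l, x ∈ A) ∧ (∀ y ∈ m, y ∈ A) ∧ l.prod = a ∧ m.prod = b ∧
    r = (List.zipWith d l m).sum } (d a b)

/-! Concatenating two pairs of equal-length words multiplies their values and adds their
`ρ`-costs, so the sets of costs `C(u,v)` with infimum `δ(u,v)` satisfy
`C(u,w) + C(v,x) ⊆ C(uv,wx)`, whence `δ(uv,wx) ≤ δ(u,w) + δ(v,x)`.
With `δ(g,g) = 0` this subadditivity alone gives two-sided invariance (multiply by `g` and `h`,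
then by `g⁻¹` and `h⁻¹`) and the triangle inequality
`δ(u,w) = δ(u·1, v·v⁻¹w) ≤ δ(u,v) + δ(1,v⁻¹w) = δ(u,v) + δ(v,w)`. -/

open Pointwise

section SubadditiveDistance

variable {M : Type*} [Group M] {δ : M → M → ℝ}

theorem mul_mul_le_of_subadditive (hself : ∀ u, δ u u = 0)
    (hmul : ∀ u v w x, δ (u * v) (w * x) ≤ δ u w + δ v x) (g h u v : M) :
    δ (g * u * h) (g * v * h) ≤ δ u v := by
  calc δ (g * u * h) (g * v * h) ≤ δ (g * u) (g * v) + δ h h := hmul _ _ _ _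
    _ ≤ δ g g + δ u v + δ h h := by gcongr; exact hmul _ _ _ _
    _ = δ u v := by simp [hself]

theorem isBiInvariant_of_subadditive (hself : ∀ u, δ u u = 0)
    (hmul : ∀ u v w x, δ (u * v) (w * x) ≤ δ u w + δ v x) : IsBiInvariant δ := by
  intro g h u v
  refine le_antisymm (mul_mul_le_of_subadditive hself hmul g h u v) ?_
  simpa [mul_assoc] using mul_mul_le_of_subadditive hself hmul g⁻¹ h⁻¹ (g * u * h) (g * v * h)

theorem triangle_of_subadditive (hself : ∀ u, δ u u = 0)
    (hmul : ∀ u v w x, δ (u * v) (w * x) ≤ δ u w + δ v x) (u v w : M) :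
    δ u w ≤ δ u v + δ v w := by
  have hleft : δ 1 (v⁻¹ * w) = δ v w := by
    simpa using (isBiInvariant_of_subadditive hself hmul v 1 1 (v⁻¹ * w)).symm
  simpa [hleft] using hmul u 1 v (v⁻¹ * w)

end SubadditiveDistance

theorem IsMetricD.nonneg {α : Type*} {d : α → α → ℝ} (hd : IsMetricD d) (a b : α) :
    0 ≤ d a b := by
  have := hd.2.2 a b a
  rw [(hd.1 a a).mpr rfl, hd.2.1 b a] at this
  linarith

section Rho

variable {α : Type*} {d : α → α → ℝ}

theorem rho_nonneg (hd : ∀ a b, 0 ≤ d a b) : ∀ v w : List α, 0 ≤ rho d v w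
  | [], _ | _ :: _, [] => by simp [rho]
  | a :: v, b :: w => by
    simpa [rho] using add_nonneg (hd a b) (rho_nonneg hd v w)

theorem rho_self (hd : ∀ a, d a a = 0) (w : List α) : rho d w w = 0 := by
  simp [rho, List.zipWith_self, hd]

theorem rho_comm (hd : ∀ a b, d a b = d b a) (v w : List α) : rho d v w = rho d w v := by
  rw [rho, List.zipWith_comm]
  simp only [hd]
  rfl

theorem rho_append {a b : List α} (c e : List α) (h : a.length = b.length) :
    rho d (a ++ c) (b ++ e) = rho d a b + rho d c e := by
  rw [rho, List.zipWith_append h, List.sum_append, rho, rho]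

end Rho

section Words

variable {G X : Type*} [Group G]

theorem wordProd_append (a b : List (Alphabet G X)) :
    wordProd (a ++ b) = wordProd a * wordProd b := by
  simp [wordProd]

theorem wordProd_replicate_one (k : ℕ) :
    wordProd (List.replicate k (Sum.inl (1 : G) : Alphabet G X)) = 1 := by
  simp [wordProd, toFP]

theorem wordProd_surjective : Function.Surjective (wordProd : List (Alphabet G X) → FP G X) := by
  have hmul : ∀ u v : FP G X, u ∈ Set.range wordProd → v ∈ Set.range wordProd →
      u * v ∈ Set.range wordProd := by
    rintro _ _ ⟨w₁, rfl⟩ ⟨w₂, rfl⟩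
    exact ⟨w₁ ++ w₂, wordProd_append w₁ w₂⟩
  intro u
  induction u using Coprod.induction_on with
  | inl g => exact ⟨[Sum.inl g], by simp [wordProd, toFP]⟩
  | inr f =>
    induction f using FreeGroup.induction_on with
    | C1 => exact ⟨[], by simp [wordProd]⟩
    | of x => exact ⟨[Sum.inr (Sum.inl x)], by simp [wordProd, toFP]⟩
    | inv_of x _ => exact ⟨[Sum.inr (Sum.inr x)], by simp [wordProd, toFP]⟩
    | mul a b ha hb => rw [map_mul]; exact hmul _ _ ha hb
  | mul a b ha hb => exact hmul a b ha hb

end Words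

section Graev

variable {G X : Type*} [Group G] {d : Alphabet G X → Alphabet G X → ℝ}

def graevCosts (d : Alphabet G X → Alphabet G X → ℝ) (u v : FP G X) : Set ℝ :=
  { r | ∃ w₁ w₂ : List (Alphabet G X), w₁.length = w₂.length ∧
    wordProd w₁ = u ∧ wordProd w₂ = v ∧ r = rho d w₁ w₂ }

theorem graevDelta_eq_sInf (u v : FP G X) : graevDelta d u v = sInf (graevCosts d u v) := rfl

theorem rho_mem_graevCosts {w₁ w₂ : List (Alphabet G X)} (h : w₁.length = w₂.length) :
    rho d w₁ w₂ ∈ graevCosts d (wordProd w₁) (wordProd w₂) :=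
  ⟨w₁, w₂, h, rfl, rfl, rfl⟩

theorem graevCosts_nonempty (u v : FP G X) : (graevCosts d u v).Nonempty := by
  obtain ⟨w₁, rfl⟩ := wordProd_surjective u
  obtain ⟨w₂, rfl⟩ := wordProd_surjective v
  have h := rho_mem_graevCosts (d := d) (w₁ := w₁ ++ .replicate w₂.length (Sum.inl 1))
    (w₂ := .replicate w₁.length (Sum.inl 1) ++ w₂) (by simp)
  simp only [wordProd_append, wordProd_replicate_one, mul_one, one_mul] at h
  exact ⟨_, h⟩

theorem nonneg_of_mem_graevCosts (hd : ∀ a b, 0 ≤ d a b) {u v : FP G X} {r : ℝ}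
    (hr : r ∈ graevCosts d u v) : 0 ≤ r := by
  obtain ⟨w₁, w₂, -, -, -, rfl⟩ := hr
  exact rho_nonneg hd w₁ w₂

theorem bddBelow_graevCosts (hd : ∀ a b, 0 ≤ d a b) (u v : FP G X) :
    BddBelow (graevCosts d u v) :=
  ⟨0, fun _ => nonneg_of_mem_graevCosts hd⟩

theorem graevCosts_comm (hd : ∀ a b, d a b = d b a) (u v : FP G X) :
    graevCosts d u v = graevCosts d v u := by
  ext r
  constructor <;> rintro ⟨w₁, w₂, hl, h₁, h₂, rfl⟩ <;>
    exact ⟨w₂, w₁, hl.symm, h₂, h₁, rho_comm hd _ _⟩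

theorem graevCosts_add_subset (u v w x : FP G X) :
    graevCosts d u w + graevCosts d v x ⊆ graevCosts d (u * v) (w * x) := by
  rintro _ ⟨_, ⟨w₁, w₂, hl, rfl, rfl, rfl⟩, _, ⟨w₃, w₄, hl', rfl, rfl, rfl⟩, rfl⟩
  change rho d w₁ w₂ + rho d w₃ w₄ ∈ _
  rw [← rho_append _ _ hl, ← wordProd_append, ← wordProd_append]
  exact rho_mem_graevCosts (by simp [hl, hl'])

theorem graevDelta_comm (hd : ∀ a b, d a b = d b a) (u v : FP G X) :
    graevDelta d u v = graevDelta d v u := by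
  rw [graevDelta_eq_sInf, graevDelta_eq_sInf, graevCosts_comm hd]

theorem graevDelta_self (hd : ∀ a b, 0 ≤ d a b) (hself : ∀ a, d a a = 0) (u : FP G X) :
    graevDelta d u u = 0 := by
  obtain ⟨w, rfl⟩ := wordProd_surjective u
  refine le_antisymm ?_ (Real.sInf_nonneg fun _ => nonneg_of_mem_graevCosts hd)
  have h := csInf_le (bddBelow_graevCosts hd _ _)
    (rho_mem_graevCosts (d := d) (rfl : w.length = w.length))
  rwa [rho_self hself] at h

theorem graevDelta_mul_le (hd : ∀ a b, 0 ≤ d a b) (u v w x : FP G X) :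
    graevDelta d (u * v) (w * x) ≤ graevDelta d u w + graevDelta d v x := by
  simp only [graevDelta_eq_sInf]
  rw [← csInf_add (graevCosts_nonempty u w) (bddBelow_graevCosts hd u w)
    (graevCosts_nonempty v x) (bddBelow_graevCosts hd v x)]
  exact csInf_le_csInf (bddBelow_graevCosts hd _ _)
    ((graevCosts_nonempty u w).add (graevCosts_nonempty v x)) (graevCosts_add_subset u v w x)

end Graev

section Extension

variable {G X : Type*} [Group G] {d' : (G ⊕ X) → (G ⊕ X) → ℝ}

theorem extD_nonneg (h' : IsMetricD d') (a b : Alphabet G X) : 0 ≤ extD d' a b := by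
  rcases a with g | x | x <;> rcases b with h | y | y <;> simp only [extD] <;>
    first
      | exact h'.nonneg _ _
      | exact Real.sInf_nonneg (by
          rintro _ ⟨c, rfl⟩
          exact add_nonneg (h'.nonneg _ _) (h'.nonneg _ _))

theorem extD_comm (h' : IsMetricD d') (a b : Alphabet G X) : extD d' a b = extD d' b a := by
  rcases a with g | x | x <;> rcases b with h | y | y <;> simp only [extD] <;>
    first
      | rfl
      | exact h'.2.1 _ _

theorem extD_self (h' : IsMetricD d') (a : Alphabet G X) : extD d' a a = 0 := by
  rcases a with g | x | x <;> exact (h'.1 _ _).mpr rfl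

end Extension

theorem graevDelta_symm_subadditive_general {G X : Type*} [Group G]
    (d' : (G ⊕ X) → (G ⊕ X) → ℝ)
    (h' : IsMetricD d') :
    (∀ u v : FP G X, graevDelta (extD d') u v = graevDelta (extD d') v u) ∧
    (∀ u v w x : FP G X,
      graevDelta (extD d') (u * v) (w * x) ≤
        graevDelta (extD d') u w + graevDelta (extD d') v x) ∧
    (∀ u v w : FP G X,
      graevDelta (extD d') u w ≤ graevDelta (extD d') u v + graevDelta (extD d') v w) ∧
    (∀ g h u v : FP G X,
      graevDelta (extD d') (g * u * h) (g * v * h) = graevDelta (extD d') u v) := by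
  have hself := graevDelta_self (extD_nonneg h') (extD_self h')
  have hmul := graevDelta_mul_le (extD_nonneg h')
  exact ⟨graevDelta_comm (extD_comm h'), hmul, triangle_of_subadditive hself hmul,
    isBiInvariant_of_subadditive hself hmul⟩

/-- `δ` is symmetric and satisfies
`δ(u·v, w·x) ≤ δ(u,w) + δ(v,x)`; consequently it satisfies the triangle inequality and is
two-sided invariant. -/
theorem graevDelta_symm_subadditive {G X : Type*} [Group G]
    (dG : G → G → ℝ) (dX : X → X → ℝ) (d' : (G ⊕ X) → (G ⊕ X) → ℝ)
    (hG : IsMetricD dG) (hGinv : IsBiInvariant dG) (hX : IsMetricD dX)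
    (h' : IsMetricD d')
    (hextG : ∀ g h : G, d' (Sum.inl g) (Sum.inl h) = dG g h)
    (hextX : ∀ x y : X, d' (Sum.inr x) (Sum.inr y) = dX x y)
    (hpos : ∀ x : X, ∃ ε > (0 : ℝ), ∀ g : G, ε ≤ d' (Sum.inl g) (Sum.inr x)) :
    (∀ u v : FP G X, graevDelta (extD d') u v = graevDelta (extD d') v u) ∧
    (∀ u v w x : FP G X,
      graevDelta (extD d') (u * v) (w * x) ≤
        graevDelta (extD d') u w + graevDelta (extD d') v x) ∧
    (∀ u v w : FP G X,
      graevDelta (extD d') u w ≤ graevDelta (extD d') u v + graevDelta (extD d') v w) ∧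
    (∀ g h u v : FP G X,
      graevDelta (extD d') (g * u * h) (g * v * h) = graevDelta (extD d') u v) :=
  graevDelta_symm_subadditive_general d' h'
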